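/- Let Λ be a pg-Bessel sequence for X₂ with bound B_Λ, Θ a qg-Bessel sequence for X₁^*, and m ∈ ℓ^{p₁} for p₁ > 1 with conjugate q₁. If Θ^(n) are qg-Bessel sequences with (Σ_i ‖Θ^(n)_i − Θ_i‖^{q₁})^{1/q₁} → 0, then ‖M_{m,Λ,Θ^(n)} − M_{m,Λ,Θ}‖ ≤ B_Λ ‖m‖_{p₁} (Σ_i ‖Θ^(n)_i − Θ_i‖^{q₁})^{1/q₁} → 0 as n → ∞. -/

import Mathlib

/-!
Each `‖Λᵢ^*‖ = ‖Λᵢ‖` is at most `B_Λ`, so the difference of the two multipliers applied to `g`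
is the series `∑ mᵢ Λᵢ^* (Θ⁽ⁿ⁾ᵢ − Θᵢ) g`, dominated termwise by `B_Λ ‖g‖ |mᵢ| ‖Θ⁽ⁿ⁾ᵢ − Θᵢ‖`;
Hölder's inequality for `ℓ^{p₁} × ℓ^{q₁}` gives the bound. The multiplier series themselves need
not converge absolutely; they converge because `mᵢ → 0` and Hölder's inequality for `ℓ^p × ℓ^q`,
applied to `‖φᵢ‖` and `‖Λᵢ x‖`, bounds their finite blocks by `sup |mᵢ| · ‖φ‖_q · B_Λ`.
-/

open NormedSpace Filter

/-- The Banach-space adjoint (dual map) of a continuous linear map. -/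
noncomputable def opAdj {X Y : Type*} [NormedAddCommGroup X] [NormedSpace ℝ X]
    [NormedAddCommGroup Y] [NormedSpace ℝ Y] (T : X →L[ℝ] Y) :
    StrongDual ℝ Y →L[ℝ] StrongDual ℝ X :=
  (ContinuousLinearMap.compL ℝ X Y ℝ).flip T

section Lp

variable {ι : Type*} {p : ℝ}

lemma le_rpow_tsum_rpow {f : ι → ℝ} (hf : ∀ i, 0 ≤ f i) (hp : 0 < p)
    (hsum : Summable fun i => f i ^ p) (i : ι) :
    f i ≤ (∑' j, f j ^ p) ^ (1 / p) :=
  calc f i = (f i ^ p) ^ (1 / p) := by rw [one_div, Real.rpow_rpow_inv (hf i) hp.ne']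
    _ ≤ (∑' j, f j ^ p) ^ (1 / p) :=
      Real.rpow_le_rpow (Real.rpow_nonneg (hf i) p)
        (hsum.le_tsum i fun j _ => Real.rpow_nonneg (hf j) p) (by positivity)

lemma rpow_sum_le_rpow_tsum {f : ι → ℝ} (hf : ∀ i, 0 ≤ f i) (hp : 0 < p)
    (hsum : Summable fun i => f i ^ p) (t : Finset ι) :
    (∑ i ∈ t, f i ^ p) ^ (1 / p) ≤ (∑' i, f i ^ p) ^ (1 / p) :=
  Real.rpow_le_rpow (Finset.sum_nonneg fun i _ => Real.rpow_nonneg (hf i) p)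
    (hsum.sum_le_tsum t fun i _ => Real.rpow_nonneg (hf i) p) (by positivity)

lemma tendsto_cofinite_zero_of_summable_abs_rpow {m : ι → ℝ} (hp : 0 < p)
    (hm : Summable fun i => |m i| ^ p) : Tendsto m cofinite (nhds 0) := by
  have hroot : Tendsto (fun y : ℝ => y ^ (1 / p)) (nhds 0) (nhds 0) := by
    simpa only [Real.zero_rpow (one_div_ne_zero hp.ne')] using
      (Real.continuousAt_rpow_const 0 (1 / p) (Or.inr (by positivity))).tendsto
  rw [tendsto_zero_iff_abs_tendsto_zero]
  refine (hroot.comp hm.tendsto_cofinite_zero).congr fun i => ?_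
  simp only [Function.comp_apply, one_div, Real.rpow_rpow_inv (abs_nonneg (m i)) hp.ne']

lemma norm_tsum_smul_le_of_norm_le_mul {E : Type*} [NormedAddCommGroup E] [NormedSpace ℝ E]
    {q c : ℝ} (hpq : p.HolderConjugate q) (hc : 0 ≤ c) {m w : ι → ℝ} {v : ι → E}
    (hw : ∀ i, 0 ≤ w i) (hvw : ∀ i, ‖v i‖ ≤ c * w i)
    (hm : Summable fun i => |m i| ^ p) (hwq : Summable fun i => w i ^ q) :
    ‖∑' i, m i • v i‖ ≤ c * (∑' i, |m i| ^ p) ^ (1 / p) * (∑' i, w i ^ q) ^ (1 / q) := by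
  have hmw : Summable fun i => |m i| * w i :=
    Real.summable_mul_of_Lp_Lq_of_nonneg hpq (fun i => abs_nonneg _) hw hm hwq
  have hle : ∀ i, ‖m i • v i‖ ≤ c * (|m i| * w i) := fun i => by
    rw [norm_smul, Real.norm_eq_abs, mul_left_comm]
    exact mul_le_mul_of_nonneg_left (hvw i) (abs_nonneg _)
  have hnorm : Summable fun i => ‖m i • v i‖ :=
    (hmw.mul_left c).of_nonneg_of_le (fun i => norm_nonneg _) hle
  calc ‖∑' i, m i • v i‖ ≤ ∑' i, ‖m i • v i‖ := norm_tsum_le_tsum_norm hnorm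
    _ ≤ ∑' i, c * (|m i| * w i) := hnorm.tsum_le_tsum hle (hmw.mul_left c)
    _ = c * ∑' i, |m i| * w i := tsum_mul_left
    _ ≤ c * ((∑' i, |m i| ^ p) ^ (1 / p) * (∑' i, w i ^ q) ^ (1 / q)) :=
      mul_le_mul_of_nonneg_left
        (Real.inner_le_Lp_mul_Lq_tsum_of_nonneg hpq (fun i => abs_nonneg _) hw hm hwq) hc
    _ = _ := (mul_assoc _ _ _).symm

end Lp

section Bessel

variable {ι X : Type*} [NormedAddCommGroup X] [NormedSpace ℝ X]
  {Y : ι → Type*} [∀ i, NormedAddCommGroup (Y i)] [∀ i, NormedSpace ℝ (Y i)]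

/-- A pg-Bessel sequence with bound `B`, in the paper's terminology. -/
def IsBessel (p : ℝ) (Λ : ∀ i, X →L[ℝ] Y i) (B : ℝ) : Prop :=
  ∀ x, Summable (fun i => ‖Λ i x‖ ^ p) ∧ (∑' i, ‖Λ i x‖ ^ p) ^ (1 / p) ≤ B * ‖x‖

namespace IsBessel

variable {p B : ℝ} {Λ : ∀ i, X →L[ℝ] Y i}

lemma rpow_sum_le (hΛ : IsBessel p Λ B) (hp : 0 < p) (x : X) (t : Finset ι) :
    (∑ i ∈ t, ‖Λ i x‖ ^ p) ^ (1 / p) ≤ B * ‖x‖ :=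
  (rpow_sum_le_rpow_tsum (fun _ => norm_nonneg _) hp (hΛ x).1 t).trans (hΛ x).2

lemma opNorm_le (hΛ : IsBessel p Λ B) (hp : 0 < p) (hB : 0 ≤ B) (i : ι) : ‖Λ i‖ ≤ B :=
  (Λ i).opNorm_le_bound hB fun x =>
    (le_rpow_tsum_rpow (fun j => norm_nonneg (Λ j x)) hp (hΛ x).1 i).trans (hΛ x).2

end IsBessel

end Bessel

section Adjoint

variable {X Y : Type*} [NormedAddCommGroup X] [NormedSpace ℝ X]
  [NormedAddCommGroup Y] [NormedSpace ℝ Y]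

lemma opAdj_apply (T : X →L[ℝ] Y) (f : StrongDual ℝ Y) : opAdj T f = f.comp T := rfl

lemma norm_opAdj_apply_le (T : X →L[ℝ] Y) (f : StrongDual ℝ Y) :
    ‖opAdj T f‖ ≤ ‖T‖ * ‖f‖ := by
  rw [opAdj_apply, mul_comm]
  exact f.opNorm_comp_le T

end Adjoint

section Multiplier

variable {ι X : Type*} [NormedAddCommGroup X] [NormedSpace ℝ X]
  {Y : ι → Type*} [∀ i, NormedAddCommGroup (Y i)] [∀ i, NormedSpace ℝ (Y i)]
  {p q B : ℝ} {Λ : ∀ i, X →L[ℝ] Y i} {φ : ∀ i, StrongDual ℝ (Y i)} {m : ι → ℝ}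

lemma norm_sum_smul_opAdj_le (hpq : p.HolderConjugate q) (hΛ : IsBessel p Λ B) (hB : 0 ≤ B)
    (hφ : Summable fun i => ‖φ i‖ ^ q) {δ : ℝ} (hδ : 0 ≤ δ) {t : Finset ι}
    (hmt : ∀ i ∈ t, |m i| ≤ δ) :
    ‖∑ i ∈ t, m i • opAdj (Λ i) (φ i)‖ ≤ δ * ((∑' i, ‖φ i‖ ^ q) ^ (1 / q) * B) := by
  refine ContinuousLinearMap.opNorm_le_bound _ (by positivity) fun x => ?_
  calc ‖(∑ i ∈ t, m i • opAdj (Λ i) (φ i)) x‖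
      ≤ ∑ i ∈ t, |m i| * (‖φ i‖ * ‖Λ i x‖) := by
        rw [sum_apply]
        refine (norm_sum_le _ _).trans (Finset.sum_le_sum fun i _ => ?_)
        rw [smul_apply, opAdj_apply, norm_smul, Real.norm_eq_abs]
        exact mul_le_mul_of_nonneg_left ((φ i).le_opNorm _) (abs_nonneg _)
    _ ≤ ∑ i ∈ t, δ * (‖φ i‖ * ‖Λ i x‖) :=
        Finset.sum_le_sum fun i hi => mul_le_mul_of_nonneg_right (hmt i hi) (by positivity)
    _ = δ * ∑ i ∈ t, ‖φ i‖ * ‖Λ i x‖ := (Finset.mul_sum _ _ _).symm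
    _ ≤ δ * ((∑ i ∈ t, ‖φ i‖ ^ q) ^ (1 / q) * (∑ i ∈ t, ‖Λ i x‖ ^ p) ^ (1 / p)) :=
        mul_le_mul_of_nonneg_left (Real.inner_le_Lp_mul_Lq_of_nonneg t hpq.symm
          (fun i _ => norm_nonneg _) (fun i _ => norm_nonneg _)) hδ
    _ ≤ δ * ((∑' i, ‖φ i‖ ^ q) ^ (1 / q) * (B * ‖x‖)) :=
        mul_le_mul_of_nonneg_left (mul_le_mul
          (rpow_sum_le_rpow_tsum (fun _ => norm_nonneg _) hpq.symm.pos hφ t)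
          (hΛ.rpow_sum_le hpq.pos x t) (by positivity) (by positivity)) hδ
    _ = δ * ((∑' i, ‖φ i‖ ^ q) ^ (1 / q) * B) * ‖x‖ := by ring

lemma summable_smul_opAdj (hpq : p.HolderConjugate q) (hΛ : IsBessel p Λ B) (hB : 0 ≤ B)
    (hm : Tendsto m cofinite (nhds 0)) (hφ : Summable fun i => ‖φ i‖ ^ q) :
    Summable fun i => m i • opAdj (Λ i) (φ i) := by
  set K := (∑' i, ‖φ i‖ ^ q) ^ (1 / q) * B
  have hK : 0 ≤ K := by positivity
  rw [summable_iff_vanishing_norm]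
  intro ε hε
  have hδ : 0 < ε / (K + 1) := by positivity
  have hsmall : ∀ᶠ i in cofinite, |m i| ≤ ε / (K + 1) := by
    filter_upwards [Metric.tendsto_nhds.1 hm _ hδ] with i hi
    simpa only [Real.dist_eq, sub_zero] using hi.le
  refine ⟨(Filter.eventually_cofinite.1 hsmall).toFinset, fun t ht => ?_⟩
  have hmt : ∀ i ∈ t, |m i| ≤ ε / (K + 1) := fun i hi => by
    by_contra h
    exact Finset.disjoint_left.1 ht hi (by simpa using h)
  calc ‖∑ i ∈ t, m i • opAdj (Λ i) (φ i)‖ ≤ ε / (K + 1) * K :=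
        norm_sum_smul_opAdj_le hpq hΛ hB hφ hδ.le hmt
    _ < ε := by
        rw [div_mul_eq_mul_div, div_lt_iff₀ (by positivity)]
        nlinarith

lemma norm_tsum_smul_opAdj_sub_le {Z : Type*} [NormedAddCommGroup Z] [NormedSpace ℝ Z]
    {p₁ q₁ : ℝ} (hpq₁ : p₁.HolderConjugate q₁) (hΛ : IsBessel p Λ B) (hp : 0 < p) (hB : 0 ≤ B)
    {Θ Θ' : ∀ i, Z →L[ℝ] StrongDual ℝ (Y i)} (hm : Summable fun i => |m i| ^ p₁)
    (hΘΘ' : Summable fun i => ‖Θ' i - Θ i‖ ^ q₁) (g : Z)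
    (hs' : Summable fun i => m i • opAdj (Λ i) (Θ' i g))
    (hs : Summable fun i => m i • opAdj (Λ i) (Θ i g)) :
    ‖(∑' i, m i • opAdj (Λ i) (Θ' i g)) - ∑' i, m i • opAdj (Λ i) (Θ i g)‖ ≤
      B * (∑' i, |m i| ^ p₁) ^ (1 / p₁) * (∑' i, ‖Θ' i - Θ i‖ ^ q₁) ^ (1 / q₁) * ‖g‖ := by
  have hle : ∀ i, ‖opAdj (Λ i) ((Θ' i - Θ i) g)‖ ≤ B * ‖g‖ * ‖Θ' i - Θ i‖ := fun i =>
    calc ‖opAdj (Λ i) ((Θ' i - Θ i) g)‖ ≤ ‖Λ i‖ * (‖Θ' i - Θ i‖ * ‖g‖) :=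
          (norm_opAdj_apply_le _ _).trans
            (mul_le_mul_of_nonneg_left ((Θ' i - Θ i).le_opNorm g) (norm_nonneg _))
      _ ≤ B * (‖Θ' i - Θ i‖ * ‖g‖) :=
          mul_le_mul_of_nonneg_right (hΛ.opNorm_le hp hB i) (by positivity)
      _ = B * ‖g‖ * ‖Θ' i - Θ i‖ := by ring
  have hsub : ∑' i, m i • opAdj (Λ i) ((Θ' i - Θ i) g) =
      (∑' i, m i • opAdj (Λ i) (Θ' i g)) - ∑' i, m i • opAdj (Λ i) (Θ i g) := by
    rw [← hs'.tsum_sub hs]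
    exact tsum_congr fun i => by rw [sub_apply, map_sub, smul_sub]
  rw [← hsub]
  refine (norm_tsum_smul_le_of_norm_le_mul hpq₁ (by positivity)
    (fun i => norm_nonneg (Θ' i - Θ i)) hle hm hΘΘ').trans_eq ?_
  ring

end Multiplier

theorem multiplier_continuous_in_Theta_general
    {X₁ X₂ : Type*} [NormedAddCommGroup X₁] [NormedSpace ℝ X₁]
    [NormedAddCommGroup X₂] [NormedSpace ℝ X₂]
    {Y : ℕ → Type*} [∀ i, NormedAddCommGroup (Y i)] [∀ i, NormedSpace ℝ (Y i)]
    (p q : ℝ) (hp : 1 < p) (hpq : 1 / p + 1 / q = 1)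
    (p₁ q₁ : ℝ) (hp₁ : 1 < p₁) (hpq₁ : 1 / p₁ + 1 / q₁ = 1)
    (Λ : ∀ i, X₂ →L[ℝ] Y i)
    (Θ : ∀ i, StrongDual ℝ X₁ →L[ℝ] StrongDual ℝ (Y i))
    (Θn : ℕ → ∀ i, StrongDual ℝ X₁ →L[ℝ] StrongDual ℝ (Y i))
    (BΛ : ℝ) (hBΛ : 0 < BΛ)
    (hΛ : ∀ x : X₂, Summable (fun i => ‖Λ i x‖ ^ p) ∧
      (∑' i, ‖Λ i x‖ ^ p) ^ (1 / p) ≤ BΛ * ‖x‖)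
    (hΘ : ∃ B > (0 : ℝ), ∀ g : StrongDual ℝ X₁, Summable (fun i => ‖Θ i g‖ ^ q) ∧
      (∑' i, ‖Θ i g‖ ^ q) ^ (1 / q) ≤ B * ‖g‖)
    (hΘn : ∀ n, ∃ B > (0 : ℝ), ∀ g : StrongDual ℝ X₁,
      Summable (fun i => ‖Θn n i g‖ ^ q) ∧
      (∑' i, ‖Θn n i g‖ ^ q) ^ (1 / q) ≤ B * ‖g‖)
    (m : ℕ → ℝ) (hm : Summable (fun i => |m i| ^ p₁))
    (hdiffsum : ∀ n, Summable (fun i => ‖Θn n i - Θ i‖ ^ q₁))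
    (hconv : Tendsto (fun n => (∑' i, ‖Θn n i - Θ i‖ ^ q₁) ^ (1 / q₁))
      atTop (nhds 0)) :
    (∀ (n : ℕ) (g : StrongDual ℝ X₁),
      Summable (fun i => m i • opAdj (Λ i) (Θn n i g)) ∧
      Summable (fun i => m i • opAdj (Λ i) (Θ i g)) ∧
      ‖(∑' i, m i • opAdj (Λ i) (Θn n i g)) - ∑' i, m i • opAdj (Λ i) (Θ i g)‖ ≤
        BΛ * (∑' i, |m i| ^ p₁) ^ (1 / p₁) *
          (∑' i, ‖Θn n i - Θ i‖ ^ q₁) ^ (1 / q₁) * ‖g‖) ∧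
    (∃ C : ℕ → ℝ, Tendsto C atTop (nhds 0) ∧
      ∀ (n : ℕ) (g : StrongDual ℝ X₁),
        ‖(∑' i, m i • opAdj (Λ i) (Θn n i g)) - ∑' i, m i • opAdj (Λ i) (Θ i g)‖ ≤
          C n * ‖g‖) := by
  have hcpq : p.HolderConjugate q :=
    Real.holderConjugate_iff.2 ⟨hp, by simpa only [one_div] using hpq⟩
  have hcpq₁ : p₁.HolderConjugate q₁ :=
    Real.holderConjugate_iff.2 ⟨hp₁, by simpa only [one_div] using hpq₁⟩
  have hm0 : Tendsto m cofinite (nhds 0) := tendsto_cofinite_zero_of_summable_abs_rpow hcpq₁.pos hm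
  have bound (n : ℕ) (g : StrongDual ℝ X₁) :=
    have hsn := summable_smul_opAdj hcpq hΛ hBΛ.le hm0 ((hΘn n).choose_spec.2 g).1
    have hs := summable_smul_opAdj hcpq hΛ hBΛ.le hm0 (hΘ.choose_spec.2 g).1
    And.intro hsn <| And.intro hs <|
      norm_tsum_smul_opAdj_sub_le hcpq₁ hΛ hcpq.pos hBΛ.le hm (hdiffsum n) g hsn hs
  refine ⟨bound, _, ?_, fun n g => (bound n g).2.2⟩
  simpa only [mul_zero] using hconv.const_mul (BΛ * (∑' i, |m i| ^ p₁) ^ (1 / p₁))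

/-- if `m ∈ ℓ^{p₁}` and the qg-Bessel sequences `Θ⁽ⁿ⁾` converge to `Θ`
in the `ℓ^{q₁}` sense, then
`‖M_{m,Λ,Θ⁽ⁿ⁾} − M_{m,Λ,Θ}‖ ≤ B_Λ ‖m‖_{p₁} (Σᵢ‖Θ⁽ⁿ⁾ᵢ − Θᵢ‖^{q₁})^{1/q₁} → 0`. -/
theorem multiplier_continuous_in_Theta
    {X₁ X₂ : Type*} [NormedAddCommGroup X₁] [NormedSpace ℝ X₁] [CompleteSpace X₁]
    [NormedAddCommGroup X₂] [NormedSpace ℝ X₂] [CompleteSpace X₂]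
    {Y : ℕ → Type*} [∀ i, NormedAddCommGroup (Y i)] [∀ i, NormedSpace ℝ (Y i)]
    [∀ i, CompleteSpace (Y i)]
    (hreflX₁ : Function.Surjective (inclusionInDoubleDual ℝ X₁))
    (hreflX₂ : Function.Surjective (inclusionInDoubleDual ℝ X₂))
    (hreflY : ∀ i, Function.Surjective (inclusionInDoubleDual ℝ (Y i)))
    (p q : ℝ) (hp : 1 < p) (hpq : 1 / p + 1 / q = 1)
    (p₁ q₁ : ℝ) (hp₁ : 1 < p₁) (hpq₁ : 1 / p₁ + 1 / q₁ = 1)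
    (Λ : ∀ i, X₂ →L[ℝ] Y i)
    (Θ : ∀ i, StrongDual ℝ X₁ →L[ℝ] StrongDual ℝ (Y i))
    (Θn : ℕ → ∀ i, StrongDual ℝ X₁ →L[ℝ] StrongDual ℝ (Y i))
    (BΛ : ℝ) (hBΛ : 0 < BΛ)
    (hΛ : ∀ x : X₂, Summable (fun i => ‖Λ i x‖ ^ p) ∧
      (∑' i, ‖Λ i x‖ ^ p) ^ (1 / p) ≤ BΛ * ‖x‖)
    (hΘ : ∃ B > (0 : ℝ), ∀ g : StrongDual ℝ X₁, Summable (fun i => ‖Θ i g‖ ^ q) ∧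
      (∑' i, ‖Θ i g‖ ^ q) ^ (1 / q) ≤ B * ‖g‖)
    (hΘn : ∀ n, ∃ B > (0 : ℝ), ∀ g : StrongDual ℝ X₁,
      Summable (fun i => ‖Θn n i g‖ ^ q) ∧
      (∑' i, ‖Θn n i g‖ ^ q) ^ (1 / q) ≤ B * ‖g‖)
    (m : ℕ → ℝ) (hm : Summable (fun i => |m i| ^ p₁))
    (hdiffsum : ∀ n, Summable (fun i => ‖Θn n i - Θ i‖ ^ q₁))
    (hconv : Tendsto (fun n => (∑' i, ‖Θn n i - Θ i‖ ^ q₁) ^ (1 / q₁))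
      atTop (nhds 0)) :
    (∀ (n : ℕ) (g : StrongDual ℝ X₁),
      Summable (fun i => m i • opAdj (Λ i) (Θn n i g)) ∧
      Summable (fun i => m i • opAdj (Λ i) (Θ i g)) ∧
      ‖(∑' i, m i • opAdj (Λ i) (Θn n i g)) - ∑' i, m i • opAdj (Λ i) (Θ i g)‖ ≤
        BΛ * (∑' i, |m i| ^ p₁) ^ (1 / p₁) *
          (∑' i, ‖Θn n i - Θ i‖ ^ q₁) ^ (1 / q₁) * ‖g‖) ∧
    (∃ C : ℕ → ℝ, Tendsto C atTop (nhds 0) ∧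
      ∀ (n : ℕ) (g : StrongDual ℝ X₁),
        ‖(∑' i, m i • opAdj (Λ i) (Θn n i g)) - ∑' i, m i • opAdj (Λ i) (Θ i g)‖ ≤
          C n * ‖g‖) :=
  multiplier_continuous_in_Theta_general p q hp hpq p₁ q₁ hp₁ hpq₁ Λ Θ Θn BΛ hBΛ hΛ hΘ hΘn m hm
    hdiffsum hconv
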